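/- arXiv:2203.08311 — 7 statements merged into one kernel-verified Lean document; each statement's English description precedes it below -/
import Mathlib

section
/- Fix a real number n. The map φ sending (a,b,c) to (n+a, n+a+b−c, n+b) is a bijection from the set {(a,b,c) ∈ ℝ³ : (n+a+b+c)² = 2(n²+a²+b²+c²), n+a ≥ 0, n+b ≥ 0} to the set {(A,B,C) ∈ ℝ³ : A ≥ 0, C ≥ 0, 4n² + B² − 4AC = 0}, with inverse θ sending (A,B,C) to (A−n, C−n, A+C−B−n). Moreover, when n is an integer and (a,b,c) ∈ ℤ³, one has gcd(n,a,b,c) = 1 if and only if gcd(n, n+a, n+a+b−c, n+b) = 1. -/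
/-!
The discriminant `4n² + B² − 4AC` of `φ(a,b,c)` is exactly minus the Descartes defect
`(n+a+b+c)² − 2(n²+a²+b²+c²)`, and the sign conditions `A, C ≥ 0` are `n+a, n+b ≥ 0`; since the
affine maps `φ` and `θ` are mutually inverse on all of `ℝ³`, they restrict to inverse bijections.
Over `ℤ`, `(m,a,b,c) ↦ (m, m+a, m+a+b−c, m+b)` is unimodular, so both quadruples have the same
common divisors and hence the same gcd.
-/

/-- The set of `(a,b,c)` for which `(n,a,b,c)` is a Descartes quadruple with
`n + a ≥ 0`, `n + b ≥ 0`. -/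
def DescSet (n : ℝ) : Set (ℝ × ℝ × ℝ) :=
  {p | (n + p.1 + p.2.1 + p.2.2) ^ 2 = 2 * (n ^ 2 + p.1 ^ 2 + p.2.1 ^ 2 + p.2.2 ^ 2) ∧
    0 ≤ n + p.1 ∧ 0 ≤ n + p.2.1}

/-- The set of `(A,B,C)` for which `[n,A,B,C]` is a BQF quadruple: `[A,B,C]` is a
positive semidefinite form of discriminant `−4n²`. -/
def BQFSet (n : ℝ) : Set (ℝ × ℝ × ℝ) :=
  {P | 0 ≤ P.1 ∧ 0 ≤ P.2.2 ∧ 4 * n ^ 2 + P.2.1 ^ 2 - 4 * P.1 * P.2.2 = 0}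

/-- The map `φ : (a,b,c) ↦ (n+a, n+a+b−c, n+b)`. -/
def phi (n : ℝ) (p : ℝ × ℝ × ℝ) : ℝ × ℝ × ℝ :=
  (n + p.1, n + p.1 + p.2.1 - p.2.2, n + p.2.1)

/-- The map `θ : (A,B,C) ↦ (A−n, C−n, A+C−B−n)`. -/
def theta (n : ℝ) (P : ℝ × ℝ × ℝ) : ℝ × ℝ × ℝ :=
  (P.1 - n, P.2.2 - n, P.1 + P.2.2 - P.2.1 - n)

section Real

variable (n : ℝ)

lemma theta_phi (p : ℝ × ℝ × ℝ) : theta n (phi n p) = p := by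
  obtain ⟨a, b, c⟩ := p
  simp only [phi, theta, Prod.mk.injEq]
  refine ⟨?_, ?_, ?_⟩ <;> ring

lemma phi_theta (P : ℝ × ℝ × ℝ) : phi n (theta n P) = P := by
  obtain ⟨A, B, C⟩ := P
  simp only [phi, theta, Prod.mk.injEq]
  refine ⟨?_, ?_, ?_⟩ <;> ring

lemma discr_phi (p : ℝ × ℝ × ℝ) :
    4 * n ^ 2 + (phi n p).2.1 ^ 2 - 4 * (phi n p).1 * (phi n p).2.2 =
      2 * (n ^ 2 + p.1 ^ 2 + p.2.1 ^ 2 + p.2.2 ^ 2) - (n + p.1 + p.2.1 + p.2.2) ^ 2 := by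
  simp only [phi]
  ring

lemma mem_BQFSet_phi_iff (p : ℝ × ℝ × ℝ) : phi n p ∈ BQFSet n ↔ p ∈ DescSet n := by
  rw [BQFSet, Set.mem_ofPred_eq, discr_phi, sub_eq_zero, eq_comm]
  simp only [DescSet, Set.mem_ofPred_eq, phi]
  tauto

lemma mapsTo_phi : Set.MapsTo (phi n) (DescSet n) (BQFSet n) :=
  fun p hp => (mem_BQFSet_phi_iff n p).2 hp

lemma mapsTo_theta : Set.MapsTo (theta n) (BQFSet n) (DescSet n) := fun P hP => by
  rwa [← mem_BQFSet_phi_iff, phi_theta]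

lemma invOn_theta_phi : Set.InvOn (theta n) (phi n) (DescSet n) (BQFSet n) :=
  ⟨fun p _ => theta_phi n p, fun P _ => phi_theta n P⟩

end Real

lemma Int.dvd_gcd_gcd_gcd_iff {d : ℕ} {m a b c : ℤ} :
    d ∣ Int.gcd (Int.gcd (Int.gcd m a : ℤ) b : ℤ) c ↔
      (d : ℤ) ∣ m ∧ (d : ℤ) ∣ a ∧ (d : ℤ) ∣ b ∧ (d : ℤ) ∣ c := by
  simp only [Int.dvd_gcd_iff, Int.natCast_dvd_natCast, and_assoc]

lemma dvd_all_iff_dvd_all_phi {R : Type*} [CommRing R] {d m a b c : R} :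
    (d ∣ m ∧ d ∣ a ∧ d ∣ b ∧ d ∣ c) ↔
      (d ∣ m ∧ d ∣ m + a ∧ d ∣ m + a + b - c ∧ d ∣ m + b) := by
  constructor
  · rintro ⟨hm, ha, hb, hc⟩
    exact ⟨hm, hm.add ha, ((hm.add ha).add hb).sub hc, hm.add hb⟩
  · rintro ⟨hm, hma, hB, hmb⟩
    have ha : d ∣ a := by simpa using hma.sub hm
    have hb : d ∣ b := by simpa using hmb.sub hm
    exact ⟨hm, ha, hb, by simpa using ((hm.add ha).add hb).sub hB⟩

lemma gcd_eq_gcd_phi (m a b c : ℤ) :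
    Int.gcd (Int.gcd (Int.gcd m a : ℤ) b : ℤ) c =
      Int.gcd (Int.gcd (Int.gcd m (m + a) : ℤ) (m + a + b - c) : ℤ) (m + b) :=
  Nat.dvd_left_iff_eq.1 fun d => by
    rw [Int.dvd_gcd_gcd_gcd_iff, Int.dvd_gcd_gcd_gcd_iff, dvd_all_iff_dvd_all_phi]

/-- `φ` is a bijection from Descartes triples to BQF triples, with inverse `θ`;
moreover, in the integral case, primitivity is preserved. -/
theorem descartes_bqf_bijection (n : ℝ) :
    Set.BijOn (phi n) (DescSet n) (BQFSet n) ∧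
    Set.InvOn (theta n) (phi n) (DescSet n) (BQFSet n) ∧
    (∀ m a b c : ℤ,
      Int.gcd (Int.gcd (Int.gcd m a : ℤ) b : ℤ) c = 1 ↔
      Int.gcd (Int.gcd (Int.gcd m (m + a) : ℤ) (m + a + b - c) : ℤ) (m + b) = 1) :=
  ⟨(invOn_theta_phi n).bijOn (mapsTo_phi n) (mapsTo_theta n), invOn_theta_phi n,
    fun m a b c => by rw [gcd_eq_gcd_phi]⟩
end

section
/- Let t, u, v, w be real numbers with w > 0, t > 1, and t² + 4v² − 4uw = 1. Let x, y be real numbers with (x − v/w)² + (y − t/(2w))² ≤ 1/(4w²). Then y > 0, and the quantity H = (w/y)·(1/(4w²) − (x − v/w)² − (y − t/(2w))²) satisfies 0 ≤ H ≤ t − √(t² − 1). -/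
/-- On the depth circle with coefficient quadruple `(t,u,v,w)` (with `w > 0`,
`t > 1`, `t² + 4v² − 4uw = 1`), the height
`H = (w/y)·(1/(4w²) − (x − v/w)² − (y − t/(2w))²)` satisfies
`0 ≤ H ≤ t − √(t² − 1)`. -/
theorem height_bound (t u v w x y : ℝ)
    (hw : 0 < w) (ht : 1 < t) (hrel : t ^ 2 + 4 * v ^ 2 - 4 * u * w = 1)
    (hxy : (x - v / w) ^ 2 + (y - t / (2 * w)) ^ 2 ≤ 1 / (4 * w ^ 2)) :
    0 < y ∧
    0 ≤ (w / y) * (1 / (4 * w ^ 2) - (x - v / w) ^ 2 - (y - t / (2 * w)) ^ 2) ∧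
    (w / y) * (1 / (4 * w ^ 2) - (x - v / w) ^ 2 - (y - t / (2 * w)) ^ 2)
      ≤ t - Real.sqrt (t ^ 2 - 1) := by
  have hw' : w ≠ 0 := ne_of_gt hw
  -- cleared-denominator form of hxy
  have h' : (w * x - v) ^ 2 + (w * y - t / 2) ^ 2 ≤ 1 / 4 := by
    have := mul_le_mul_of_nonneg_left hxy (le_of_lt (by positivity : (0:ℝ) < w ^ 2))
    calc (w * x - v) ^ 2 + (w * y - t / 2) ^ 2
        = w ^ 2 * ((x - v / w) ^ 2 + (y - t / (2 * w)) ^ 2) := by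
          field_simp
      _ ≤ w ^ 2 * (1 / (4 * w ^ 2)) := this
      _ = 1 / 4 := by field_simp
  have hy : 0 < y := by nlinarith [sq_nonneg (w * x - v), sq_nonneg (w * y - t / 2 + 1 / 2)]
  have hnn : 0 ≤ 1 / (4 * w ^ 2) - (x - v / w) ^ 2 - (y - t / (2 * w)) ^ 2 := by linarith
  refine ⟨hy, mul_nonneg (by positivity) hnn, ?_⟩
  set r := Real.sqrt (t ^ 2 - 1) with hr
  have hr0 : 0 ≤ r := Real.sqrt_nonneg _
  have hr2 : r ^ 2 = t ^ 2 - 1 := Real.sq_sqrt (by nlinarith)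
  rw [div_mul_eq_mul_div, div_le_iff₀ hy]
  have key : w * (1 / (4 * w ^ 2) - (x - v / w) ^ 2 - (y - t / (2 * w)) ^ 2)
      = (1 / 4 - (w * x - v) ^ 2 - (w * y - t / 2) ^ 2) / w := by
    field_simp
  rw [key, div_le_iff₀ hw]
  nlinarith [sq_nonneg (2 * w * y - r), sq_nonneg (w * x - v), mul_pos hw hy, mul_nonneg hr0 (mul_pos hw hy).le]
end

section
/- Let a, h, r be real numbers with 0 < r < h. Then the hyperbolic area of the closed disk {(x,y) ∈ ℝ² : (x−a)² + (y−h)² ≤ r²}, namely the integral of 1/y² over this disk with respect to Lebesgue measure dx dy, equals 2π·(h/√(h² − r²) − 1). -/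
/-!
Integrate `1 / y ^ 2` first along vertical chords. Over `x = a + u` the disk meets the line in
`[h - s, h + s]` with `s = √(r ^ 2 - u ^ 2)`, contributing `1 / (h - s) - 1 / (h + s)
= 2 s / (k + u ^ 2)` where `k = h ^ 2 - r ^ 2`. An explicit arcsin antiderivative gives
`∫ √(r ^ 2 - u ^ 2) / (k + u ^ 2) du = π (√(k + r ^ 2) / √k - 1)`, and `√(k + r ^ 2) = h`.
-/

open MeasureTheory Real Set
open scoped Interval

theorem setIntegral_prod_eq_integral_setIntegral_slice {α β E : Type*} [MeasurableSpace α]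
    [MeasurableSpace β] [NormedAddCommGroup E] [NormedSpace ℝ E] {μ : Measure α} {ν : Measure β}
    [SFinite μ] [SFinite ν] {s : Set (α × β)} (hs : MeasurableSet s) {f : α × β → E}
    (hf : IntegrableOn f s (μ.prod ν)) :
    ∫ z in s, f z ∂μ.prod ν = ∫ x, ∫ y in Prod.mk x ⁻¹' s, f (x, y) ∂ν ∂μ := by
  rw [← integral_indicator hs, integral_prod _ (hf.integrable_indicator hs)]
  congr 1 with x
  rw [← integral_indicator (measurable_prodMk_left hs)]
  rfl

theorem integral_one_div_sq {a b : ℝ} (h : (0 : ℝ) ∉ [[a, b]]) :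
    ∫ y in a..b, 1 / y ^ 2 = 1 / a - 1 / b := by
  have := integral_zpow (n := -2) (Or.inr ⟨by norm_num, h⟩)
  simp only [zpow_neg, zpow_ofNat, one_div] at this ⊢
  rw [this]
  norm_num
  ring

theorem isCompact_setOf_sub_sq_add_sub_sq_le (a b r : ℝ) :
    IsCompact {p : ℝ × ℝ | (p.1 - a) ^ 2 + (p.2 - b) ^ 2 ≤ r ^ 2} := by
  refine ((isCompact_Icc (a := a - |r|) (b := a + |r|)).prod
    (isCompact_Icc (a := b - |r|) (b := b + |r|))).of_isClosed_subset
    (isClosed_le (by fun_prop) continuous_const) fun p hp => ?_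
  have h₁ : |p.1 - a| ≤ |r| := sq_le_sq.1 (by nlinarith [sq_nonneg (p.2 - b), hp.out])
  have h₂ : |p.2 - b| ≤ |r| := sq_le_sq.1 (by nlinarith [sq_nonneg (p.1 - a), hp.out])
  rw [abs_sub_le_iff] at h₁ h₂
  exact ⟨⟨by linarith, by linarith⟩, ⟨by linarith, by linarith⟩⟩

theorem setOf_sq_add_sub_sq_le_of_sq_le {u b r : ℝ} (hu : u ^ 2 ≤ r ^ 2) :
    {y : ℝ | u ^ 2 + (y - b) ^ 2 ≤ r ^ 2} = Icc (b - √(r ^ 2 - u ^ 2)) (b + √(r ^ 2 - u ^ 2)) := by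
  ext y
  rw [mem_ofPred_eq, ← le_sub_iff_add_le', Real.sq_le (sub_nonneg.2 hu), mem_Icc]
  constructor <;> rintro ⟨h₁, h₂⟩ <;> constructor <;> linarith

theorem integral_one_div_sq_disk_slice (u : ℝ) {b r : ℝ} (hr : 0 ≤ r) (hrb : r < b) :
    ∫ y in {y : ℝ | u ^ 2 + (y - b) ^ 2 ≤ r ^ 2}, 1 / y ^ 2
      = 2 * √(r ^ 2 - u ^ 2) / (b ^ 2 - r ^ 2 + u ^ 2) := by
  by_cases hu : u ^ 2 ≤ r ^ 2
  · rw [setOf_sq_add_sub_sq_le_of_sq_le hu]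
    have hs_sq : √(r ^ 2 - u ^ 2) ^ 2 = r ^ 2 - u ^ 2 := sq_sqrt (sub_nonneg.2 hu)
    have hs_nonneg := sqrt_nonneg (r ^ 2 - u ^ 2)
    generalize √(r ^ 2 - u ^ 2) = s at hs_sq hs_nonneg ⊢
    have hsb : s < b := by nlinarith
    rw [integral_Icc_eq_integral_Ioc, ← intervalIntegral.integral_of_le (by linarith),
      integral_one_div_sq (by rw [uIcc_of_le (by linarith)]; intro h; linarith [h.1])]
    have : b - s ≠ 0 := by linarith
    have : b + s ≠ 0 := by linarith
    have : b ^ 2 - r ^ 2 + u ^ 2 ≠ 0 := by nlinarith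
    field_simp
    linear_combination 2 * s * hs_sq
  · have hempty : {y : ℝ | u ^ 2 + (y - b) ^ 2 ≤ r ^ 2} = ∅ := by
      ext y
      simp only [mem_ofPred_eq, mem_empty_iff_false, iff_false, not_le]
      nlinarith [sq_nonneg (y - b)]
    rw [hempty, sqrt_eq_zero_of_nonpos (by linarith)]
    simp

theorem hasDerivAt_arcsin_div {r u : ℝ} (hr : 0 < r) (hu : u ∈ Ioo (-r) r) :
    HasDerivAt (fun u => arcsin (u / r)) (1 / √(r ^ 2 - u ^ 2)) u := by
  have hu₁ : u / r ≠ -1 := by rw [Ne, div_eq_iff hr.ne']; linarith [hu.1]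
  have hu₂ : u / r ≠ 1 := by rw [Ne, div_eq_iff hr.ne']; linarith [hu.2]
  refine ((hasDerivAt_arcsin hu₁ hu₂).comp u ((hasDerivAt_id u).div_const r)).congr_deriv ?_
  have : 1 - (u / r) ^ 2 = (r ^ 2 - u ^ 2) / r ^ 2 := by field_simp
  rw [this, sqrt_div' _ (sq_nonneg r), sqrt_sq hr.le]
  field_simp

theorem hasDerivAt_mul_div_sqrt_add_sq (H r k u : ℝ) (hr : r ≠ 0) (hk : 0 < k) :
    HasDerivAt (fun u => H * u / (r * √(k + u ^ 2))) (H * k / (r * √(k + u ^ 2) ^ 3)) u := by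
  have hq : 0 < k + u ^ 2 := by positivity
  have hsqrt : HasDerivAt (fun u => √(k + u ^ 2)) (u / √(k + u ^ 2)) u := by
    refine (((hasDerivAt_pow 2 u).const_add k).sqrt hq.ne').congr_deriv ?_
    field_simp
    simp
  refine (((hasDerivAt_id' u).const_mul H).div (hsqrt.const_mul r) (by positivity)).congr_deriv ?_
  have hq_sq := sq_sqrt hq.le
  have : √(k + u ^ 2) ≠ 0 := by positivity
  field_simp
  linear_combination H * hq_sq

theorem hasDerivAt_arcsin_mul_div_sqrt_add_sq {r k u : ℝ} (hr : 0 < r) (hk : 0 < k)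
    (hu : u ∈ Ioo (-r) r) :
    HasDerivAt (fun u => arcsin (√(k + r ^ 2) * u / (r * √(k + u ^ 2))))
      (√(k + r ^ 2) * √k / (√(r ^ 2 - u ^ 2) * (k + u ^ 2))) u := by
  have hq : 0 < k + u ^ 2 := by positivity
  have hs : 0 < r ^ 2 - u ^ 2 := by nlinarith [hu.1, hu.2]
  set H := √(k + r ^ 2)
  set q := √(k + u ^ 2)
  set s := √(r ^ 2 - u ^ 2)
  have hH_sq : H ^ 2 = k + r ^ 2 := sq_sqrt (by positivity)
  have hq_sq : q ^ 2 = k + u ^ 2 := sq_sqrt hq.le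
  have hs_sq : s ^ 2 = r ^ 2 - u ^ 2 := sq_sqrt hs.le
  have hk_sq : √k ^ 2 = k := sq_sqrt hk.le
  have hq_pos : 0 < q := sqrt_pos.2 hq
  have hs_pos : 0 < s := sqrt_pos.2 hs
  have hk_pos : 0 < √k := sqrt_pos.2 hk
  have hcos : 1 - (H * u / (r * q)) ^ 2 = (√k * s / (r * q)) ^ 2 := by
    field_simp
    linear_combination r ^ 2 * hq_sq - u ^ 2 * hH_sq - k * hs_sq - s ^ 2 * hk_sq
  have hg_sq : (H * u / (r * q)) ^ 2 < 1 := by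
    have : 0 < (√k * s / (r * q)) ^ 2 := by positivity
    linarith
  have hg₁ : H * u / (r * q) ≠ -1 := fun h => by rw [h] at hg_sq; norm_num at hg_sq
  have hg₂ : H * u / (r * q) ≠ 1 := fun h => by rw [h] at hg_sq; norm_num at hg_sq
  refine ((hasDerivAt_arcsin hg₁ hg₂).comp u
    (hasDerivAt_mul_div_sqrt_add_sq H r k u hr.ne' hk)).congr_deriv ?_
  rw [hcos, sqrt_sq (by positivity)]
  field_simp
  linear_combination (-q * H * k) * hq_sq - H * q ^ 3 * hk_sq

/-- Unlike the equivalent antiderivative `√(k + r ^ 2) / √k * arctan (√(k + r ^ 2) u / (√k s)) -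
arcsin (u / r)`, `s = √(r ^ 2 - u ^ 2)`, this arcsin form is continuous at `u = ±r`. -/
noncomputable def chordPrimitive (r k u : ℝ) : ℝ :=
  √(k + r ^ 2) / √k * arcsin (√(k + r ^ 2) * u / (r * √(k + u ^ 2))) - arcsin (u / r)

theorem hasDerivAt_chordPrimitive {r k u : ℝ} (hr : 0 < r) (hk : 0 < k) (hu : u ∈ Ioo (-r) r) :
    HasDerivAt (chordPrimitive r k) (√(r ^ 2 - u ^ 2) / (k + u ^ 2)) u := by
  refine (((hasDerivAt_arcsin_mul_div_sqrt_add_sq hr hk hu).const_mul _).sub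
    (hasDerivAt_arcsin_div hr hu)).congr_deriv ?_
  have hs : 0 < r ^ 2 - u ^ 2 := by nlinarith [hu.1, hu.2]
  have hH_sq : √(k + r ^ 2) ^ 2 = k + r ^ 2 := sq_sqrt (by positivity)
  have hs_sq : √(r ^ 2 - u ^ 2) ^ 2 = r ^ 2 - u ^ 2 := sq_sqrt hs.le
  have : 0 < √(r ^ 2 - u ^ 2) := sqrt_pos.2 hs
  have : 0 < √k := sqrt_pos.2 hk
  field_simp
  linear_combination hH_sq - hs_sq

theorem continuous_chordPrimitive {r k : ℝ} (hr : r ≠ 0) (hk : 0 < k) :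
    Continuous (chordPrimitive r k) := by
  unfold chordPrimitive
  have : ∀ u, r * √(k + u ^ 2) ≠ 0 := fun u => by positivity
  fun_prop (disch := assumption)

theorem chordPrimitive_self {r k : ℝ} (hr : 0 < r) (hk : 0 < k) :
    chordPrimitive r k r = π / 2 * (√(k + r ^ 2) / √k - 1) := by
  have : √(k + r ^ 2) * r / (r * √(k + r ^ 2)) = 1 := by field_simp
  rw [chordPrimitive, this, div_self hr.ne', arcsin_one]
  ring

theorem chordPrimitive_neg_self {r k : ℝ} (hr : 0 < r) (hk : 0 < k) :
    chordPrimitive r k (-r) = -(π / 2 * (√(k + r ^ 2) / √k - 1)) := by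
  have : √(k + r ^ 2) * -r / (r * √(k + r ^ 2)) = -1 := by field_simp
  rw [chordPrimitive, neg_sq, this, neg_div, div_self hr.ne', arcsin_neg, arcsin_one]
  ring

theorem integral_sqrt_sq_sub_sq_div_add_sq {r k : ℝ} (hr : 0 < r) (hk : 0 < k) :
    ∫ u, √(r ^ 2 - u ^ 2) / (k + u ^ 2) = π * (√(k + r ^ 2) / √k - 1) := by
  have hsupp : ∀ u ∉ Icc (-r) r, √(r ^ 2 - u ^ 2) / (k + u ^ 2) = 0 := fun u hu => by
    rw [sqrt_eq_zero_of_nonpos, zero_div]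
    rw [mem_Icc, not_and_or, not_le, not_le] at hu
    rcases hu with hu | hu <;> nlinarith
  have hint : IntervalIntegrable (fun u => √(r ^ 2 - u ^ 2) / (k + u ^ 2)) volume (-r) r :=
    (Continuous.div (by fun_prop) (by fun_prop) fun u => by positivity).intervalIntegrable _ _
  rw [← setIntegral_eq_integral_of_forall_compl_eq_zero hsupp, integral_Icc_eq_integral_Ioc,
    ← intervalIntegral.integral_of_le (by linarith),
    intervalIntegral.integral_eq_sub_of_hasDeriv_right_of_le (by linarith)
      (continuous_chordPrimitive hr.ne' hk).continuousOn
      (fun u hu => (hasDerivAt_chordPrimitive hr hk hu).hasDerivWithinAt) hint,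
    chordPrimitive_self hr hk, chordPrimitive_neg_self hr hk]
  ring

/-- The hyperbolic area of a Euclidean disk of center `(a,h)` and radius `r`
contained in the upper half plane (`0 < r < h`) is `2π(h/√(h² − r²) − 1)`. -/
theorem hyperbolic_area_of_disk (a h r : ℝ) (hr : 0 < r) (hrh : r < h) :
    ∫ p in {p : ℝ × ℝ | (p.1 - a) ^ 2 + (p.2 - h) ^ 2 ≤ r ^ 2}, 1 / p.2 ^ 2
      = 2 * Real.pi * (h / Real.sqrt (h ^ 2 - r ^ 2) - 1) := by
  have hk : 0 < h ^ 2 - r ^ 2 := by nlinarith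
  have hdisk := isCompact_setOf_sub_sq_add_sub_sq_le a h r
  have hint : IntegrableOn (fun p : ℝ × ℝ => 1 / p.2 ^ 2)
      {p : ℝ × ℝ | (p.1 - a) ^ 2 + (p.2 - h) ^ 2 ≤ r ^ 2} := by
    refine ContinuousOn.integrableOn_compact hdisk
      (continuousOn_const.div (by fun_prop) fun p hp => (pow_pos ?_ 2).ne')
    nlinarith [sq_nonneg (p.1 - a), hp.out]
  have hslice (x : ℝ) : ∫ y in {y : ℝ | (x - a) ^ 2 + (y - h) ^ 2 ≤ r ^ 2}, 1 / y ^ 2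
      = 2 * (√(r ^ 2 - (x - a) ^ 2) / (h ^ 2 - r ^ 2 + (x - a) ^ 2)) := by
    rw [integral_one_div_sq_disk_slice (x - a) hr.le hrh, mul_div_assoc]
  rw [Measure.volume_eq_prod] at hint ⊢
  rw [setIntegral_prod_eq_integral_setIntegral_slice hdisk.isClosed.measurableSet hint]
  simp only [preimage_ofPred_eq, hslice]
  rw [integral_const_mul,
    integral_sub_right_eq_self (fun u => √(r ^ 2 - u ^ 2) / (h ^ 2 - r ^ 2 + u ^ 2)),
    integral_sqrt_sq_sub_sq_div_add_sq hr hk, sub_add_cancel, sqrt_sq (hr.trans hrh).le]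
  ring
end

section
/- Let p ∈ ℂ and r > 0 satisfy |p|² − r² = 1. Then the map z ↦ 1/conj(z) maps the circle {z ∈ ℂ : |z − p| = r} onto itself, and maps the closed disk {z ∈ ℂ : |z − p| ≤ r} onto itself. -/
/-!
For `z ≠ 0` one has `‖z‖² (‖1/z̄ − p‖² − r²) = ‖z − p‖² − r²` as soon as `‖p‖² − r² = 1`, so
inversion in the unit circle preserves the sign of the power `‖z − p‖² − r²` of a point with
respect to the circle. Since the inversion is an involution, it maps both the circle (power zero)
and the disk (power at most zero) onto themselves.
-/

open Complex ComplexConjugate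

theorem involutive_inv_conj : Function.Involutive fun z : ℂ => (conj z)⁻¹ := fun z => by
  simp only [map_inv₀, conj_conj, inv_inv]

theorem sq_norm_mul_sq_norm_inv_conj_sub (p : ℂ) {z : ℂ} (hz : z ≠ 0) :
    ‖z‖ ^ 2 * ‖(conj z)⁻¹ - p‖ ^ 2 - ‖z - p‖ ^ 2 = (‖p‖ ^ 2 - 1) * (‖z‖ ^ 2 - 1) := by
  have hmul : conj z * ((conj z)⁻¹ - p) = 1 - p * conj z := by
    rw [mul_sub, mul_inv_cancel₀ ((map_ne_zero _).2 hz), mul_comm]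
  have hnorm : ‖z‖ * ‖(conj z)⁻¹ - p‖ = ‖1 - p * conj z‖ := by
    rw [← hmul, norm_mul, norm_conj]
  rw [← mul_pow, hnorm]
  simp only [Complex.sq_norm, normSq_apply, sub_re, sub_im, mul_re, mul_im, one_re, one_im,
    conj_re, conj_im]
  ring

section PowerOfPoint

variable {p : ℂ} {r : ℝ}

theorem sq_norm_mul_sq_norm_inv_conj_sub_sub_sq (h : ‖p‖ ^ 2 - r ^ 2 = 1) {z : ℂ} (hz : z ≠ 0) :
    ‖z‖ ^ 2 * (‖(conj z)⁻¹ - p‖ ^ 2 - r ^ 2) = ‖z - p‖ ^ 2 - r ^ 2 := by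
  linear_combination sq_norm_mul_sq_norm_inv_conj_sub p hz + (‖z‖ ^ 2 - 1) * h

theorem norm_inv_conj_sub_le_iff (hr : 0 ≤ r) (h : ‖p‖ ^ 2 - r ^ 2 = 1) (z : ℂ) :
    ‖(conj z)⁻¹ - p‖ ≤ r ↔ ‖z - p‖ ≤ r := by
  rcases eq_or_ne z 0 with rfl | hz
  · simp -- `(conj 0)⁻¹ = 0`, so both sides are the same statement
  rw [← sq_le_sq₀ (norm_nonneg _) hr, ← sq_le_sq₀ (norm_nonneg _) hr, ← sub_nonpos,
    ← sub_nonpos (a := ‖z - p‖ ^ 2), ← sq_norm_mul_sq_norm_inv_conj_sub_sub_sq h hz]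
  exact (smul_nonpos_iff_nonpos_of_pos_left (pow_pos (norm_pos_iff.2 hz) 2)).symm

theorem norm_inv_conj_sub_eq_iff (hr : 0 ≤ r) (h : ‖p‖ ^ 2 - r ^ 2 = 1) (z : ℂ) :
    ‖(conj z)⁻¹ - p‖ = r ↔ ‖z - p‖ = r := by
  rcases eq_or_ne z 0 with rfl | hz
  · simp
  rw [← sq_eq_sq₀ (norm_nonneg _) hr, ← sq_eq_sq₀ (norm_nonneg _) hr, ← sub_eq_zero,
    ← sub_eq_zero (a := ‖z - p‖ ^ 2), ← sq_norm_mul_sq_norm_inv_conj_sub_sub_sq h hz]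
  simp [hz]

end PowerOfPoint

/-- If `|p|² − r² = 1`, the Möbius map `z ↦ 1/conj(z)` (inversion in the unit
circle) maps the circle of center `p` and radius `r` onto itself, and maps the
corresponding closed disk onto itself. -/
theorem SU_preserves_circle (p : ℂ) (r : ℝ) (hr : 0 < r)
    (h : ‖p‖ ^ 2 - r ^ 2 = 1) :
    (fun z : ℂ => ((starRingEnd ℂ) z)⁻¹) '' {z | ‖z - p‖ = r}
      = {z | ‖z - p‖ = r} ∧
    (fun z : ℂ => ((starRingEnd ℂ) z)⁻¹) '' {z | ‖z - p‖ ≤ r}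
      = {z | ‖z - p‖ ≤ r} := by
  rw [involutive_inv_conj.image_eq_preimage_symm]
  exact ⟨Set.ext (norm_inv_conj_sub_eq_iff hr.le h), Set.ext (norm_inv_conj_sub_le_iff hr.le h)⟩
end

section
/- Let c₁, c₂ be integers with A := c₁ + c₂ > 0. Let X = {(a,b) ∈ ℤ² : (c₁+c₂+a+b)² = 2(c₁²+c₂²+a²+b²) and gcd(c₁,c₂,a,b) = 1}, and consider the equivalence relation on X generated by (a,b) ∼ (b,a) and (a,b) ∼ (a, 2c₁+2c₂+2a−b). Then the number of equivalence classes of X equals the number of pairs (B,C) ∈ ℤ² with B² − 4AC = −4c₁², gcd(A,B,C) = 1, and 0 ≤ B ≤ A. -/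
/-!
With `A = c₁ + c₂`, `B = c₁ + c₂ + a - b`, `C = c₁ + a`, the Descartes equation becomes
`B² - 4AC = -4c₁²`, and `(a, b) ↦ (B, C)` is an affine bijection which also matches
primitivity of `(c₁, c₂, a, b)` with that of `(A, B, C)` (at `2` by a parity argument mod `4`).
The swap sends `B` to `2A - B` and the Vieta move sends `B` to `-B`, so `B` is constant up to
sign modulo `2A` along a class, while its composites shift `B` by `±2A`. Since a point of `X`
is determined by `B`, every class contains exactly one point with `0 ≤ B ≤ A`.
-/

/-- The set of `(a,b)` such that `(c₁,c₂,a,b)` is a primitive integral Descartes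
quadruple. -/
def X (c₁ c₂ : ℤ) : Set (ℤ × ℤ) :=
  {p | (c₁ + c₂ + p.1 + p.2) ^ 2 = 2 * (c₁ ^ 2 + c₂ ^ 2 + p.1 ^ 2 + p.2 ^ 2) ∧
    Int.gcd (Int.gcd (Int.gcd c₁ c₂ : ℤ) p.1 : ℤ) p.2 = 1}

/-- The generating moves: swapping `a` and `b`, and the Vieta move
`(a,b) ↦ (a, 2c₁+2c₂+2a−b)`. -/
def move (c₁ c₂ : ℤ) : (ℤ × ℤ) → (ℤ × ℤ) → Prop := fun p q =>
  q = (p.2, p.1) ∨ q = (p.1, 2 * c₁ + 2 * c₂ + 2 * p.1 - p.2)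

/-- The equivalence classes of `X` under the equivalence relation generated by
the two moves. -/
def classes (c₁ c₂ : ℤ) : Set (Set (ℤ × ℤ)) :=
  {C | ∃ p ∈ X c₁ c₂, C = {q ∈ X c₁ c₂ | Relation.EqvGen (move c₁ c₂) p q}}

open Relation

namespace Int

theorem gcd_gcd_eq_one_iff {x y z : ℤ} :
    Int.gcd (Int.gcd x y : ℤ) z = 1 ↔
      ∀ p : ℕ, p.Prime → (p : ℤ) ∣ x → (p : ℤ) ∣ y → ¬(p : ℤ) ∣ z := by
  simp only [Nat.eq_one_iff_not_exists_prime_dvd, Int.dvd_gcd_iff, Int.dvd_coe_gcd_iff, not_and,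
    and_imp]

theorem gcd_gcd_gcd_eq_one_iff {w x y z : ℤ} :
    Int.gcd (Int.gcd (Int.gcd w x : ℤ) y : ℤ) z = 1 ↔
      ∀ p : ℕ, p.Prime → (p : ℤ) ∣ w → (p : ℤ) ∣ x → (p : ℤ) ∣ y → ¬(p : ℤ) ∣ z := by
  simp only [gcd_gcd_eq_one_iff, Int.dvd_coe_gcd_iff, and_imp]

theorem two_dvd_of_sq_add_sq_eq_four_mul {x y n : ℤ} (h : x ^ 2 + y ^ 2 = 4 * n) : 2 ∣ y := by
  rcases Int.even_or_odd y with hy | hy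
  · exact even_iff_two_dvd.mp hy
  have hy2 := Int.sq_mod_four_eq_one_of_odd hy
  rcases Int.even_or_odd x with ⟨k, rfl⟩ | hx
  · have : (k + k) ^ 2 = 4 * k ^ 2 := by ring
    omega
  · have := Int.sq_mod_four_eq_one_of_odd hx
    omega

theorem prime_dvd_of_dvd_of_discr_eq {p : ℕ} (hp : p.Prime) {A B C c : ℤ}
    (h : B ^ 2 - 4 * A * C = -4 * c ^ 2) (hA : (p : ℤ) ∣ A) (hB : (p : ℤ) ∣ B) (hC : (p : ℤ) ∣ C) :
    (p : ℤ) ∣ c := by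
  have hp' : Prime (p : ℤ) := Nat.prime_iff_prime_int.mp hp
  by_cases hp2 : p = 2
  · subst hp2
    push_cast at h hA hB hC
    obtain ⟨B', rfl⟩ := hB
    obtain ⟨A', rfl⟩ := hA
    obtain ⟨C', rfl⟩ := hC
    exact two_dvd_of_sq_add_sq_eq_four_mul (x := B') (n := A' * C')
      (mul_left_cancel₀ four_ne_zero (by linear_combination h))
  · have h4c : (p : ℤ) ∣ 4 * c ^ 2 :=
      (dvd_sub ((hA.mul_left 4).mul_right C) (dvd_pow hB two_ne_zero)).trans
        ⟨1, by linear_combination h⟩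
    rcases hp'.dvd_mul.mp h4c with h4 | hc
    · have : p ∣ 2 := hp.dvd_of_dvd_pow (n := 2) (by exact_mod_cast h4)
      exact absurd ((Nat.prime_dvd_prime_iff_eq hp Nat.prime_two).mp this) hp2
    · exact hp'.dvd_of_dvd_pow hc

theorem eq_of_modEq_or_modEq_neg {n x y : ℤ} (hx : 0 ≤ x ∧ x ≤ n) (hy : 0 ≤ y ∧ y ≤ n)
    (h : x ≡ y [ZMOD 2 * n] ∨ x ≡ -y [ZMOD 2 * n]) : x = y := by
  rcases h with h | h <;> obtain ⟨k, hk⟩ := h.dvd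
  · rcases lt_trichotomy k 0 with hk0 | rfl | hk0 <;> nlinarith
  · rcases lt_trichotomy k (-1) with hk0 | rfl | hk0
    · nlinarith
    · linarith
    · obtain rfl | hk1 := (Int.add_one_le_iff.mpr hk0).eq_or_lt
      · linarith
      · nlinarith

theorem equivalence_modEq_or_modEq_neg (n : ℤ) :
    Equivalence fun x y : ℤ => x ≡ y [ZMOD n] ∨ x ≡ -y [ZMOD n] where
  refl x := Or.inl rfl
  symm
    | .inl h => .inl h.symm
    | .inr h => .inr (by simpa using h.neg.symm)
  trans
    | .inl h, .inl h' => .inl (h.trans h')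
    | .inl h, .inr h' => .inr (h.trans h')
    | .inr h, .inl h' => .inr (h.trans h'.neg)
    | .inr h, .inr h' => .inl (by simpa using h.trans h'.neg)

end Int

section

variable {c₁ c₂ : ℤ} {p q : ℤ × ℤ}

def vieta (c₁ c₂ : ℤ) (p : ℤ × ℤ) : ℤ × ℤ := (p.1, 2 * c₁ + 2 * c₂ + 2 * p.1 - p.2)

/-- The quadruple `(c₁, c₂, a, b)` corresponds to the form `A x² + B xy + C y²` with
`A = c₁ + c₂`, `B = c₁ + c₂ + a - b`, `C = c₁ + a`. -/
def toForm (c₁ c₂ : ℤ) : ℤ × ℤ ≃ ℤ × ℤ where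
  toFun p := (c₁ + c₂ + p.1 - p.2, c₁ + p.1)
  invFun f := (f.2 - c₁, f.2 + c₂ - f.1)
  left_inv p := by ext <;> dsimp only <;> ring
  right_inv f := by ext <;> dsimp only <;> ring

@[simp]
theorem toForm_apply (p : ℤ × ℤ) : toForm c₁ c₂ p = (c₁ + c₂ + p.1 - p.2, c₁ + p.1) := rfl

def reducedForms (c₁ c₂ : ℤ) : Set (ℤ × ℤ) :=
  {bc : ℤ × ℤ | bc.1 ^ 2 - 4 * (c₁ + c₂) * bc.2 = -4 * c₁ ^ 2 ∧
    Int.gcd (Int.gcd (c₁ + c₂) bc.1 : ℤ) bc.2 = 1 ∧ 0 ≤ bc.1 ∧ bc.1 ≤ c₁ + c₂}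

def reduced (c₁ c₂ : ℤ) : Set (ℤ × ℤ) :=
  {p ∈ X c₁ c₂ | 0 ≤ (toForm c₁ c₂ p).1 ∧ (toForm c₁ c₂ p).1 ≤ c₁ + c₂}

def moveClass (c₁ c₂ : ℤ) (p : ℤ × ℤ) : Set (ℤ × ℤ) :=
  {q ∈ X c₁ c₂ | EqvGen (move c₁ c₂) p q}

theorem descartes_iff_discr_eq :
    (c₁ + c₂ + p.1 + p.2) ^ 2 = 2 * (c₁ ^ 2 + c₂ ^ 2 + p.1 ^ 2 + p.2 ^ 2) ↔
      (toForm c₁ c₂ p).1 ^ 2 - 4 * (c₁ + c₂) * (toForm c₁ c₂ p).2 = -4 * c₁ ^ 2 := by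
  simp only [toForm_apply]
  constructor <;> intro h <;> linear_combination -h

theorem gcd_toForm_eq_one_iff
    (h : (c₁ + c₂ + p.1 + p.2) ^ 2 = 2 * (c₁ ^ 2 + c₂ ^ 2 + p.1 ^ 2 + p.2 ^ 2)) :
    Int.gcd (Int.gcd (Int.gcd c₁ c₂ : ℤ) p.1 : ℤ) p.2 = 1 ↔
      Int.gcd (Int.gcd (c₁ + c₂) (toForm c₁ c₂ p).1 : ℤ) (toForm c₁ c₂ p).2 = 1 := by
  rw [Int.gcd_gcd_gcd_eq_one_iff, Int.gcd_gcd_eq_one_iff]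
  refine forall₂_congr fun ℓ hℓ => ?_
  simp only [toForm_apply, ← not_and, not_iff_not]
  constructor
  · rintro ⟨h₁, h₂, ha, hb⟩
    exact ⟨dvd_add h₁ h₂, dvd_sub (dvd_add (dvd_add h₁ h₂) ha) hb, dvd_add h₁ ha⟩
  · rintro ⟨hA, hB, hC⟩
    have h₁ := Int.prime_dvd_of_dvd_of_discr_eq hℓ (descartes_iff_discr_eq.mp h) hA hB hC
    have ha : (ℓ : ℤ) ∣ p.1 := by simpa using dvd_sub hC h₁
    exact ⟨h₁, by simpa using dvd_sub hA h₁, ha, by simpa using dvd_sub (dvd_add hA ha) hB⟩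

theorem reduced_eq_preimage : reduced c₁ c₂ = toForm c₁ c₂ ⁻¹' reducedForms c₁ c₂ := by
  ext p
  refine ⟨fun ⟨⟨h, hg⟩, hB⟩ => ⟨descartes_iff_discr_eq.mp h, (gcd_toForm_eq_one_iff h).mp hg, hB⟩,
    fun ⟨h, hg, hB⟩ => ?_⟩
  have h' := descartes_iff_discr_eq.mpr h
  exact ⟨⟨h', (gcd_toForm_eq_one_iff h').mpr hg⟩, hB⟩

theorem swap_mem_X (hp : p ∈ X c₁ c₂) : p.swap ∈ X c₁ c₂ := by
  refine ⟨by simp only [Prod.fst_swap, Prod.snd_swap]; linear_combination hp.1,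
    Int.gcd_gcd_gcd_eq_one_iff.mpr fun ℓ hℓ h₁ h₂ hb ha => ?_⟩
  exact Int.gcd_gcd_gcd_eq_one_iff.mp hp.2 ℓ hℓ h₁ h₂ ha hb

theorem vieta_mem_X (hp : p ∈ X c₁ c₂) : vieta c₁ c₂ p ∈ X c₁ c₂ := by
  refine ⟨by unfold vieta; linear_combination hp.1,
    Int.gcd_gcd_gcd_eq_one_iff.mpr fun ℓ hℓ h₁ h₂ ha hb' => ?_⟩
  refine Int.gcd_gcd_gcd_eq_one_iff.mp hp.2 ℓ hℓ h₁ h₂ ha ?_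
  exact (dvd_sub_right (((h₁.mul_left 2).add (h₂.mul_left 2)).add (ha.mul_left 2))).mp hb'

theorem move_swap (p : ℤ × ℤ) : move c₁ c₂ p p.swap := Or.inl rfl

theorem move_vieta (p : ℤ × ℤ) : move c₁ c₂ p (vieta c₁ c₂ p) := Or.inr rfl

theorem toForm_swap_fst (p : ℤ × ℤ) :
    (toForm c₁ c₂ p.swap).1 = 2 * (c₁ + c₂) - (toForm c₁ c₂ p).1 := by
  simp only [toForm_apply, Prod.fst_swap, Prod.snd_swap]
  ring

theorem toForm_vieta_fst (p : ℤ × ℤ) : (toForm c₁ c₂ (vieta c₁ c₂ p)).1 = -(toForm c₁ c₂ p).1 := by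
  simp only [toForm_apply, vieta]
  ring

theorem toForm_fst_modEq_neg_of_move (h : move c₁ c₂ p q) :
    (toForm c₁ c₂ p).1 ≡ -(toForm c₁ c₂ q).1 [ZMOD 2 * (c₁ + c₂)] := by
  rcases h with rfl | rfl
  · exact Int.modEq_iff_dvd.mpr ⟨-1, by simp only [toForm_apply]; ring⟩
  · exact Int.modEq_iff_dvd.mpr ⟨0, by simp only [toForm_apply]; ring⟩

theorem toForm_fst_modEq_of_eqvGen (h : EqvGen (move c₁ c₂) p q) :
    (toForm c₁ c₂ p).1 ≡ (toForm c₁ c₂ q).1 [ZMOD 2 * (c₁ + c₂)] ∨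
      (toForm c₁ c₂ p).1 ≡ -(toForm c₁ c₂ q).1 [ZMOD 2 * (c₁ + c₂)] :=
  ((Int.equivalence_modEq_or_modEq_neg _).comap fun p => (toForm c₁ c₂ p).1).eqvGen_iff.mp
    (EqvGen.mono (fun _ _ hxy => Or.inr (toForm_fst_modEq_neg_of_move hxy)) _ _ h)

theorem eq_of_toForm_fst_eq (hA : c₁ + c₂ ≠ 0) (hp : p ∈ X c₁ c₂) (hq : q ∈ X c₁ c₂)
    (h : (toForm c₁ c₂ p).1 = (toForm c₁ c₂ q).1) : p = q := by
  have hp' := descartes_iff_discr_eq.mp hp.1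
  have hq' := descartes_iff_discr_eq.mp hq.1
  refine (toForm c₁ c₂).injective (Prod.ext h ?_)
  rw [h] at hp'
  exact mul_left_cancel₀ (mul_ne_zero four_ne_zero hA) (by linear_combination hq' - hp')

theorem exists_eqvGen_toForm_fst_eq_add (hp : p ∈ X c₁ c₂) (k : ℤ) :
    ∃ q ∈ X c₁ c₂, EqvGen (move c₁ c₂) p q ∧
      (toForm c₁ c₂ q).1 = (toForm c₁ c₂ p).1 + 2 * (c₁ + c₂) * k := by
  induction k using Int.induction_on with
  | zero => exact ⟨p, hp, EqvGen.refl p, by ring⟩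
  | succ k ih =>
    obtain ⟨q, hq, hpq, hB⟩ := ih
    refine ⟨(vieta c₁ c₂ q).swap, swap_mem_X (vieta_mem_X hq),
      hpq.trans _ _ _ ((EqvGen.rel _ _ (move_vieta q)).trans _ _ _ (EqvGen.rel _ _ (move_swap _))),
      ?_⟩
    rw [toForm_swap_fst, toForm_vieta_fst, hB]
    ring
  | pred k ih =>
    obtain ⟨q, hq, hpq, hB⟩ := ih
    refine ⟨vieta c₁ c₂ q.swap, vieta_mem_X (swap_mem_X hq),
      hpq.trans _ _ _ ((EqvGen.rel _ _ (move_swap q)).trans _ _ _ (EqvGen.rel _ _ (move_vieta _))),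
      ?_⟩
    rw [toForm_vieta_fst, toForm_swap_fst, hB]
    ring

theorem exists_mem_reduced_eqvGen (hA : 0 < c₁ + c₂) (hp : p ∈ X c₁ c₂) :
    ∃ q ∈ reduced c₁ c₂, EqvGen (move c₁ c₂) p q := by
  set B := (toForm c₁ c₂ p).1
  obtain ⟨q, hq, hpq, hB⟩ := exists_eqvGen_toForm_fst_eq_add hp (-(B / (2 * (c₁ + c₂))))
  have hBq : (toForm c₁ c₂ q).1 = B % (2 * (c₁ + c₂)) := by rw [hB, Int.emod_def]; ring
  have h₀ := Int.emod_nonneg B (by positivity : 2 * (c₁ + c₂) ≠ 0)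
  have h₁ := Int.emod_lt_of_pos B (by positivity : 0 < 2 * (c₁ + c₂))
  by_cases hle : (toForm c₁ c₂ q).1 ≤ c₁ + c₂
  · exact ⟨q, ⟨hq, by linarith, hle⟩, hpq⟩
  · refine ⟨q.swap, ⟨swap_mem_X hq, ?_⟩, hpq.trans _ _ _ (EqvGen.rel _ _ (move_swap q))⟩
    rw [toForm_swap_fst]
    constructor <;> linarith

theorem classes_eq_image_reduced (hA : 0 < c₁ + c₂) :
    classes c₁ c₂ = moveClass c₁ c₂ '' reduced c₁ c₂ := by
  ext C
  constructor
  · rintro ⟨p, hp, rfl⟩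
    obtain ⟨q, hq, hpq⟩ := exists_mem_reduced_eqvGen hA hp
    refine ⟨q, hq, Set.ext fun r => and_congr_right fun _ => ?_⟩
    exact ⟨fun hqr => hpq.trans _ _ _ hqr, fun hpr => hpq.symm.trans _ _ _ hpr⟩
  · rintro ⟨p, hp, rfl⟩
    exact ⟨p, hp.1, rfl⟩

theorem injOn_moveClass_reduced (hA : 0 < c₁ + c₂) :
    Set.InjOn (moveClass c₁ c₂) (reduced c₁ c₂) := by
  intro p hp q hq h
  have hq' : q ∈ moveClass c₁ c₂ p := by
    rw [h]
    exact ⟨hq.1, EqvGen.refl q⟩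
  exact eq_of_toForm_fst_eq hA.ne' hp.1 hq.1
    (Int.eq_of_modEq_or_modEq_neg hp.2 hq.2 (toForm_fst_modEq_of_eqvGen hq'.2))

end

/-- The tangency number `T(c₁,c₂)`: the number of equivalence classes of `X`
equals the number of reduced representatives `(B,C)` with `B² − 4AC = −4c₁²`,
`gcd(A,B,C) = 1`, `0 ≤ B ≤ A`, where `A = c₁ + c₂ > 0`. -/
theorem tangency_number_count (c₁ c₂ : ℤ) (hA : 0 < c₁ + c₂) :
    (classes c₁ c₂).ncard =
      Set.ncard {bc : ℤ × ℤ |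
        bc.1 ^ 2 - 4 * (c₁ + c₂) * bc.2 = -4 * c₁ ^ 2 ∧
        Int.gcd (Int.gcd (c₁ + c₂) bc.1 : ℤ) bc.2 = 1 ∧
        0 ≤ bc.1 ∧ bc.1 ≤ c₁ + c₂} := by
  change (classes c₁ c₂).ncard = (reducedForms c₁ c₂).ncard
  rw [classes_eq_image_reduced hA, (injOn_moveClass_reduced hA).ncard_image,
    reduced_eq_preimage, Set.ncard_preimage_of_injective_subset_range (toForm c₁ c₂).injective
      (by simp)]
end

section
/- Let c₁ be a positive integer and A a positive integer. Let T = #{(B,C) ∈ ℤ² : B² − 4AC = −4c₁², gcd(A,B,C) = 1, 0 ≤ B ≤ A}. For each prime p with p^e exactly dividing A (e = v_p(A) ≥ 1), let s_p be the number of x ∈ {0,1,…,p^e − 1} such that p^e divides x² + c₁² and it is not the case that both p divides x and p divides (x² + c₁²)/p^e. Then ∏_{p | A} s_p ≤ 2T ≤ (∏_{p | A} s_p) + 2, where the product is over the distinct primes dividing A; equivalently 0 ≤ T − (1/2)·∏ s_p ≤ 1. -/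
/-- The tangency count `T`: the number of `(B,C)` with `B² − 4AC = −4c₁²`,
`gcd(A,B,C) = 1`, `0 ≤ B ≤ A`. -/
noncomputable def T (c₁ A : ℕ) : ℕ :=
  Set.ncard {bc : ℤ × ℤ |
    bc.1 ^ 2 - 4 * (A : ℤ) * bc.2 = -4 * (c₁ : ℤ) ^ 2 ∧
    Int.gcd (Int.gcd (A : ℤ) bc.1 : ℤ) bc.2 = 1 ∧
    0 ≤ bc.1 ∧ bc.1 ≤ (A : ℤ)}

/-- The local solution count `s_p`: the number of `x ∈ {0,…,p^e−1}` with
`p^e ∣ x² + c₁²` and not both `p ∣ x` and `p ∣ (x² + c₁²)/p^e`. -/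
noncomputable def s (c₁ p e : ℕ) : ℕ :=
  Set.ncard {x : ℕ | x < p ^ e ∧ ((p : ℤ) ^ e ∣ (x : ℤ) ^ 2 + (c₁ : ℤ) ^ 2) ∧
    ¬(((p : ℤ) ∣ (x : ℤ)) ∧ ((p : ℤ) ∣ (((x : ℤ) ^ 2 + (c₁ : ℤ) ^ 2) / (p : ℤ) ^ e)))}


/-!
Writing `B = 2x`, the pairs `(B, C)` counted by `T` are the `x` with `0 ≤ 2x ≤ A`, `A ∣ x² + c₁²`
and no prime `p ∣ A` dividing both `x` and `(x² + c₁²)/A`; for `p = 2` the factor `2` of `B` does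
not matter, since `4 ∣ x² + c₁²` forces `x` to be even. This primitivity condition depends only
on `x` modulo `A` and, by the Chinese remainder theorem, splits into the same condition modulo each
`p^e ∥ A`, so it has `∏ s_p` solutions modulo `A`. The reflection `x ↦ A − x` preserves the
solutions and exchanges the two halves `2x ≤ A` and `2x > A`, up to the points `0` and `A/2`.
-/

open Finset

theorem Int.two_dvd_of_four_dvd_sq_add_sq {x c : ℤ} (h : 4 ∣ x ^ 2 + c ^ 2) : 2 ∣ x := by
  by_contra hx
  have hx2 : x ^ 2 % 4 = 1 :=
    Int.sq_mod_four_eq_one_of_odd (Int.not_even_iff_odd.mp (by rwa [even_iff_two_dvd]))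
  have hc2 : c ^ 2 % 4 = 0 ∨ c ^ 2 % 4 = 1 := by
    rcases Int.even_or_odd c with ⟨k, rfl⟩ | hc
    · left; ring_nf; omega
    · exact Or.inr (Int.sq_mod_four_eq_one_of_odd hc)
  omega

theorem card_filter_range_mul_of_coprime {m n : ℕ} (hmn : m.Coprime n) {P Q : ℕ → Prop}
    [DecidablePred P] [DecidablePred Q] (hP : ∀ x, P (x % m) ↔ P x) (hQ : ∀ x, Q (x % n) ↔ Q x) :
    #{x ∈ range (m * n) | P x ∧ Q x} = #{x ∈ range m | P x} * #{x ∈ range n | Q x} := by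
  rcases Nat.eq_zero_or_pos m with rfl | hm
  · simp
  rcases Nat.eq_zero_or_pos n with rfl | hn
  · simp
  let crt (y : ℕ × ℕ) : ℕ := Nat.chineseRemainder hmn y.1 y.2
  have crt_mod {a b : ℕ} (ha : a < m) (hb : b < n) : crt (a, b) % m = a ∧ crt (a, b) % n = b :=
    ⟨Eq.trans (Nat.chineseRemainder hmn a b).2.1 (Nat.mod_eq_of_lt ha),
      Eq.trans (Nat.chineseRemainder hmn a b).2.2 (Nat.mod_eq_of_lt hb)⟩
  rw [← card_product]
  refine card_nbij' (fun x => (x % m, x % n)) crt ?_ ?_ ?_ ?_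
  · intro x hx
    simp only [mem_coe, mem_filter, mem_range, mem_product] at hx ⊢
    exact ⟨⟨Nat.mod_lt x hm, (hP x).mpr hx.2.1⟩, ⟨Nat.mod_lt x hn, (hQ x).mpr hx.2.2⟩⟩
  · rintro ⟨a, b⟩ hab
    simp only [mem_coe, mem_filter, mem_range, mem_product] at hab ⊢
    obtain ⟨ha, hb⟩ := crt_mod hab.1.1 hab.2.1
    refine ⟨Nat.chineseRemainder_lt_mul hmn a b hm.ne' hn.ne', ?_, ?_⟩
    · rw [← hP, ha]; exact hab.1.2
    · rw [← hQ, hb]; exact hab.2.2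
  · intro x hx
    simp only [mem_coe, mem_filter, mem_range] at hx
    refine Nat.ModEq.eq_of_lt_of_lt ?_ (Nat.chineseRemainder_lt_mul hmn _ _ hm.ne' hn.ne') hx.1
    exact (Nat.modEq_and_modEq_iff_modEq_mul hmn).mp
      ⟨(Nat.chineseRemainder hmn _ _).2.1.trans (Nat.mod_modEq x m),
        (Nat.chineseRemainder hmn _ _).2.2.trans (Nat.mod_modEq x n)⟩
  · rintro ⟨a, b⟩ hab
    simp only [mem_coe, mem_filter, mem_range, mem_product] at hab
    obtain ⟨ha, hb⟩ := crt_mod hab.1.1 hab.2.1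
    exact Prod.ext ha hb

theorem card_le_two_mul_card_half_le_card_add_two {A : ℕ} {S : Finset ℕ} (hS : ∀ x ∈ S, x < A)
    (hrefl : ∀ x ∈ S, 0 < x → A - x ∈ S) :
    #S ≤ 2 * #{x ∈ S | 2 * x ≤ A} ∧ 2 * #{x ∈ S | 2 * x ≤ A} ≤ #S + 2 := by
  have hsplit := card_filter_add_card_filter_not (s := S) (fun x => 2 * x ≤ A)
  have hupper : {x ∈ S | ¬2 * x ≤ A} ⊆ {x ∈ S | 2 * x ≤ A}.image (A - ·) := by
    intro x hx
    rw [mem_filter] at hx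
    have := hS x hx.1
    exact mem_image.mpr ⟨A - x, mem_filter.mpr ⟨hrefl x hx.1 (by omega), by omega⟩, by omega⟩
  have hlower : {x ∈ S | 2 * x ≤ A} ⊆ {x ∈ S | ¬2 * x ≤ A}.image (A - ·) ∪ {0, A / 2} := by
    intro x hx
    rw [mem_filter] at hx
    have := hS x hx.1
    rw [mem_union, mem_image, mem_insert, mem_singleton]
    by_cases hx0 : x = 0 ∨ 2 * x = A
    · right; omega
    · exact Or.inl ⟨A - x, mem_filter.mpr ⟨hrefl x hx.1 (by omega), by omega⟩, by omega⟩
  have h1 := (card_le_card hupper).trans card_image_le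
  have h2 := ((card_le_card hlower).trans (card_union_le _ _)).trans
    (add_le_add card_image_le (card_le_two (a := 0) (b := A / 2)))
  omega

/-- `p ∣ (x² + c²) / n` is written `n * p ∣ x² + c²`, which needs no division. -/
def IsPrimitiveSol (c n : ℕ) (x : ℤ) : Prop :=
  (n : ℤ) ∣ x ^ 2 + c ^ 2 ∧ ∀ p ∈ n.primeFactors, ¬((p : ℤ) ∣ x ∧ (n * p : ℤ) ∣ x ^ 2 + c ^ 2)

instance (c n : ℕ) : DecidablePred (IsPrimitiveSol c n) := fun _ => by
  unfold IsPrimitiveSol; infer_instance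

namespace IsPrimitiveSol

variable {c m n : ℕ} {x y : ℤ}

theorem of_modEq (h : x ≡ y [ZMOD n]) (hx : IsPrimitiveSol c n x) : IsPrimitiveSol c n y := by
  obtain ⟨hdvd, hprim⟩ := hx
  have hyx : (n : ℤ) ∣ y - x := h.dvd
  have hsq : y ^ 2 + c ^ 2 = x ^ 2 + c ^ 2 + (y - x) * (y + x) := by ring
  refine ⟨hsq ▸ hdvd.add (hyx.mul_right _), fun p hp ⟨hpy, hnp⟩ => hprim p hp ?_⟩
  have hpyx : (p : ℤ) ∣ y - x :=
    (Int.natCast_dvd_natCast.mpr (Nat.dvd_of_mem_primeFactors hp)).trans hyx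
  have hpx : (p : ℤ) ∣ x := by simpa using hpy.sub hpyx
  refine ⟨hpx, ?_⟩
  have := hnp.sub (mul_dvd_mul hyx (hpy.add hpx))
  rwa [hsq, add_sub_cancel_right] at this

theorem modEq_iff (h : x ≡ y [ZMOD n]) : IsPrimitiveSol c n x ↔ IsPrimitiveSol c n y :=
  ⟨of_modEq h, of_modEq h.symm⟩

theorem neg_iff : IsPrimitiveSol c n (-x) ↔ IsPrimitiveSol c n x := by
  simp only [IsPrimitiveSol, neg_sq, Int.dvd_neg]

theorem mul_iff (hmn : m.Coprime n) :
    IsPrimitiveSol c (m * n) x ↔ IsPrimitiveSol c m x ∧ IsPrimitiveSol c n x := by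
  set X := x ^ 2 + (c : ℤ) ^ 2
  have local_iff {m n : ℕ} (hmn : m.Coprime n) (hX : (n : ℤ) ∣ X) {p : ℕ}
      (hp : p ∈ m.primeFactors) :
      ((m * n : ℕ) * p : ℤ) ∣ X ↔ (m * p : ℤ) ∣ X := by
    have hpn : p.Coprime n := hmn.coprime_dvd_left (Nat.dvd_of_mem_primeFactors hp)
    have hcop : IsCoprime (m * p : ℤ) n := by
      exact_mod_cast (Nat.Coprime.mul_left hmn hpn).isCoprime
    push_cast
    exact ⟨(dvd_trans (by rw [mul_right_comm]; exact dvd_mul_right _ _) ·),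
      fun h => by rw [mul_right_comm]; exact hcop.mul_dvd h hX⟩
  have hdvd : ((m * n : ℕ) : ℤ) ∣ X ↔ (m : ℤ) ∣ X ∧ (n : ℤ) ∣ X := by
    push_cast
    exact ⟨fun h => ⟨(dvd_mul_right _ _).trans h, (dvd_mul_left _ _).trans h⟩,
      fun h => hmn.isCoprime.mul_dvd h.1 h.2⟩
  unfold IsPrimitiveSol
  rw [hmn.primeFactors_mul, forall_mem_union, hdvd]
  constructor
  · rintro ⟨⟨hm, hn⟩, hpm, hpn⟩
    refine ⟨⟨hm, fun p hp => ?_⟩, ⟨hn, fun p hp => ?_⟩⟩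
    · rw [← local_iff hmn hn hp]; exact hpm p hp
    · rw [← local_iff hmn.symm hm hp, mul_comm n]; exact hpn p hp
  · rintro ⟨⟨hm, hpm⟩, ⟨hn, hpn⟩⟩
    refine ⟨⟨hm, hn⟩, fun p hp => ?_, fun p hp => ?_⟩
    · rw [local_iff hmn hn hp]; exact hpm p hp
    · rw [mul_comm m, local_iff hmn.symm hm hp]; exact hpn p hp

end IsPrimitiveSol

def primitiveSols (c n : ℕ) : Finset ℕ := {x ∈ range n | IsPrimitiveSol c n x}

theorem mem_primitiveSols {c n x : ℕ} : x ∈ primitiveSols c n ↔ x < n ∧ IsPrimitiveSol c n x := by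
  rw [primitiveSols, mem_filter, mem_range]

theorem sub_mem_primitiveSols {c n x : ℕ} (hx : x ∈ primitiveSols c n) (hx0 : 0 < x) :
    n - x ∈ primitiveSols c n := by
  rw [mem_primitiveSols] at hx ⊢
  refine ⟨by omega, (IsPrimitiveSol.modEq_iff ?_).mp (IsPrimitiveSol.neg_iff.mpr hx.2)⟩
  rw [Nat.cast_sub hx.1.le]
  exact Int.modEq_iff_dvd.mpr ⟨1, by ring⟩

theorem card_primitiveSols_mul {c m n : ℕ} (hmn : m.Coprime n) :
    #(primitiveSols c (m * n)) = #(primitiveSols c m) * #(primitiveSols c n) := by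
  have periodic (k x : ℕ) : IsPrimitiveSol c k (x % k : ℕ) ↔ IsPrimitiveSol c k x :=
    IsPrimitiveSol.modEq_iff (by rw [Int.natCast_mod]; exact Int.mod_modEq _ _)
  simp only [primitiveSols, IsPrimitiveSol.mul_iff hmn]
  exact card_filter_range_mul_of_coprime hmn (periodic m) (periodic n)

theorem card_primitiveSols_eq_prod (c : ℕ) {n : ℕ} (hn : n ≠ 0) :
    #(primitiveSols c n) = ∏ p ∈ n.primeFactors, #(primitiveSols c (p ^ n.factorization p)) := by
  have hone : #(primitiveSols c 1) = 1 := by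
    rw [card_eq_one]; exact ⟨0, by ext x; simp [mem_primitiveSols, IsPrimitiveSol]⟩
  rw [Nat.multiplicative_factorization (fun n => #(primitiveSols c n))
      (fun _ _ => card_primitiveSols_mul) hone hn,
    Nat.prod_factorization_eq_prod_primeFactors]

theorem s_eq_card_primitiveSols (c : ℕ) {p e : ℕ} (hp : p.Prime) (he : e ≠ 0) :
    s c p e = #(primitiveSols c (p ^ e)) := by
  rw [s, ← Set.ncard_coe_finset]
  congr 1
  ext x
  simp only [Set.mem_ofPred_eq, mem_coe, mem_primitiveSols, IsPrimitiveSol,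
    Nat.primeFactors_prime_pow he hp, mem_singleton, forall_eq, Nat.cast_pow]
  exact and_congr_right fun _ => and_congr_right fun hdvd => by rw [Int.dvd_div_iff_mul_dvd hdvd]

theorem isPrimitiveSol_iff_gcd_eq_one {c A : ℕ} {x C : ℤ} (hA : A ≠ 0)
    (hAC : A * C = x ^ 2 + c ^ 2) :
    IsPrimitiveSol c A x ↔ Int.gcd (Int.gcd A (2 * x) : ℤ) C = 1 := by
  have dvd_of_dvd_two_mul {p : ℕ} (hp : p.Prime) (hpA : p ∣ A) (hpC : (p : ℤ) ∣ C)
      (h : (p : ℤ) ∣ 2 * x) : (p : ℤ) ∣ x := by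
    refine (Int.Prime.dvd_mul' hp h).elim (fun h2 => ?_) id
    obtain rfl : p = 2 := (Nat.prime_dvd_prime_iff_eq hp Nat.prime_two).mp (by exact_mod_cast h2)
    exact Int.two_dvd_of_four_dvd_sq_add_sq
      (hAC ▸ mul_dvd_mul (Int.natCast_dvd_natCast.mpr hpA) hpC)
  have dvd_gcd_iff (p : ℕ) (a b : ℤ) : p ∣ Int.gcd a b ↔ (p : ℤ) ∣ a ∧ (p : ℤ) ∣ b := by
    rw [← Int.natCast_dvd_natCast, Int.dvd_coe_gcd_iff]
  have hA' : (A : ℤ) ≠ 0 := by exact_mod_cast hA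
  rw [IsPrimitiveSol, ← hAC, Nat.eq_one_iff_not_exists_prime_dvd]
  simp only [dvd_mul_right, true_and, Nat.mem_primeFactors, ne_eq, hA, not_false_eq_true, and_true,
    mul_dvd_mul_iff_left hA', dvd_gcd_iff, Int.natCast_dvd_natCast]
  refine forall_congr' fun p => ⟨?_, ?_⟩
  · rintro h hp ⟨⟨hpA, hpx⟩, hpC⟩
    exact h ⟨hp, hpA⟩ ⟨dvd_of_dvd_two_mul hp hpA hpC hpx, hpC⟩
  · rintro h ⟨hp, hpA⟩ ⟨hpx, hpC⟩
    exact h hp ⟨⟨hpA, hpx.mul_left 2⟩, hpC⟩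

theorem T_eq_card_filter {c A : ℕ} (hA : 0 < A) :
    T c A = #{x ∈ primitiveSols c A | 2 * x ≤ A} := by
  let f (x : ℕ) : ℤ × ℤ := (2 * x, (x ^ 2 + c ^ 2) / A)
  have hf : Function.Injective f := fun x y h => by simpa [f] using congrArg Prod.fst h
  have hA' : (A : ℤ) ≠ 0 := by exact_mod_cast hA.ne'
  rw [T, ← card_image_of_injective _ hf, ← Set.ncard_coe_finset]
  congr 1
  ext ⟨B, C⟩
  simp only [Set.mem_ofPred_eq, coe_image, Set.mem_image, mem_coe, mem_filter, mem_primitiveSols]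
  constructor
  · rintro ⟨hdisc, hgcd, hB0, hBA⟩
    obtain ⟨b, rfl⟩ : 2 ∣ B :=
      Int.prime_two.dvd_of_dvd_pow (n := 2) ⟨2 * (A * C - c ^ 2), by linear_combination hdisc⟩
    lift b to ℕ using by omega
    have hAC : A * C = (b : ℤ) ^ 2 + c ^ 2 := by linarith
    refine ⟨b, ⟨⟨by omega, (isPrimitiveSol_iff_gcd_eq_one hA.ne' hAC).mpr hgcd⟩, by omega⟩, ?_⟩
    simp [f, ← hAC, Int.mul_ediv_cancel_left _ hA']
  · rintro ⟨x, ⟨⟨hxA, hx⟩, h2x⟩, hfx⟩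
    obtain ⟨C', hC'⟩ := hx.1
    simp only [f, hC', Int.mul_ediv_cancel_left _ hA', Prod.mk.injEq] at hfx
    obtain ⟨rfl, rfl⟩ := hfx
    refine ⟨by linear_combination 4 * hC', (isPrimitiveSol_iff_gcd_eq_one hA.ne' hC'.symm).mp hx,
      by positivity, by omega⟩

theorem tangency_number_local_product_general (c₁ A : ℕ) (hA : 0 < A) :
    (∏ p ∈ A.primeFactors, s c₁ p (A.factorization p)) ≤ 2 * T c₁ A ∧
    2 * T c₁ A ≤ (∏ p ∈ A.primeFactors, s c₁ p (A.factorization p)) + 2 := by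
  have hprod : ∏ p ∈ A.primeFactors, s c₁ p (A.factorization p) = #(primitiveSols c₁ A) := by
    rw [card_primitiveSols_eq_prod c₁ hA.ne']
    refine prod_congr rfl fun p hp => ?_
    have hp' := Nat.prime_of_mem_primeFactors hp
    exact s_eq_card_primitiveSols c₁ hp'
      (hp'.factorization_pos_of_dvd hA.ne' (Nat.dvd_of_mem_primeFactors hp)).ne'
  rw [hprod, T_eq_card_filter hA]
  exact card_le_two_mul_card_half_le_card_add_two (fun x hx => (mem_primitiveSols.mp hx).1)
    fun x hx hx0 => sub_mem_primitiveSols hx hx0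

/-- `T` differs from `(1/2)·∏_{p^e ∥ A} s_p` by at most `1`:
`∏ s_p ≤ 2T ≤ ∏ s_p + 2`. -/
theorem tangency_number_local_product (c₁ A : ℕ) (hc : 0 < c₁) (hA : 0 < A) :
    (∏ p ∈ A.primeFactors, s c₁ p (A.factorization p)) ≤ 2 * T c₁ A ∧
    2 * T c₁ A ≤ (∏ p ∈ A.primeFactors, s c₁ p (A.factorization p)) + 2 :=
  tangency_number_local_product_general c₁ A hA
end

section
/- Let p be an odd prime, e ≥ 1 an integer, and c₁ a positive integer with p^f exactly dividing c₁ (f = v_p(c₁) ≥ 0). Let s_p(e,c₁) be the number of x ∈ {0,1,…,p^e − 1} such that p^e divides x² + c₁² and it is not the case that both p divides x and p divides (x² + c₁²)/p^e. Then: if e ≥ 2f+1 and p ≡ 1 (mod 4), s_p(e,c₁) = 2·p^f if f = 0 (i.e. equals 2) and 2(p−1)p^{f−1} if f ≥ 1; if e ≥ 2f+1 and p ≡ 3 (mod 4), s_p(e,c₁) = 0; if e = 2f (with f ≥ 1) and p ≡ 1 (mod 4), s_p(e,c₁) = (p−2)p^{f−1}; if e = 2f and p ≡ 3 (mod 4),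 s_p(e,c₁) = p^f; if e < 2f and e is even, s_p(e,c₁) = (p−1)p^{e/2 − 1}; and if e < 2f and e is odd, s_p(e,c₁) = 0. -/
open Finset

theorem card_filter_range_mul_dvd_sub {n : ℕ} (hn : 0 < n) (M : ℕ) (r : ℤ) :
    #{x ∈ range (M * n) | (n : ℤ) ∣ ↑x - r} = M := by
  obtain ⟨v, hv⟩ : ∃ v : ℕ, (v : ℤ) ≡ r [ZMOD n] :=
    ⟨(r % n).toNat, by
      rw [Int.toNat_of_nonneg (Int.emod_nonneg _ (by omega))]
      exact Int.mod_modEq r n⟩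
  have hdvd (x : ℕ) : (n : ℤ) ∣ x - r ↔ x ≡ v [MOD n] := by
    rw [← Int.modEq_iff_dvd, Nat.ModEq.comm, ← Int.natCast_modEq_iff]
    exact ⟨hv.trans, hv.symm.trans⟩
  simp_rw [hdvd, ← Nat.count_eq_card_filter_range, Nat.count_modEq_card _ hn,
    Nat.mul_div_cancel _ hn, Nat.mul_mod_left]
  simp

theorem card_filter_range_pow_dvd {p : ℕ} (hp : 0 < p) {k K : ℕ} (hkK : k ≤ K) :
    #{x ∈ range (p ^ K) | p ^ k ∣ x} = p ^ (K - k) := by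
  have := card_filter_range_mul_dvd_sub (pow_pos hp k) (p ^ (K - k)) 0
  rw [← pow_add, Nat.sub_add_cancel hkK] at this
  simpa only [sub_zero, Int.natCast_dvd_natCast] using this

theorem card_filter_range_mul_of_dvd {d : ℕ} (hd : 0 < d) (N : ℕ) {P Q : ℕ → Prop}
    [DecidablePred P] [DecidablePred Q] (hdvd : ∀ x, P x → d ∣ x) (hPQ : ∀ y, P (d * y) ↔ Q y) :
    #{x ∈ range (N * d) | P x} = #{y ∈ range N | Q y} := by
  have : {x ∈ range (N * d) | P x} =
      {y ∈ range N | Q y}.map ⟨(d * ·), mul_right_injective₀ hd.ne'⟩ := by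
    ext x
    simp only [mem_filter, mem_range, mem_map, Function.Embedding.coeFn_mk]
    constructor
    · rintro ⟨hx, hPx⟩
      obtain ⟨y, rfl⟩ := hdvd x hPx
      exact ⟨y, ⟨by nlinarith, (hPQ y).1 hPx⟩, rfl⟩
    · rintro ⟨y, ⟨hy, hQy⟩, rfl⟩
      exact ⟨by nlinarith, (hPQ y).2 hQy⟩
  rw [this, card_map]

theorem card_filter_and_not_of_imp {α : Type*} (s : Finset α) {P Q : α → Prop}
    [DecidablePred P] [DecidablePred Q] (h : ∀ x ∈ s, Q x → P x) :
    #{x ∈ s | P x ∧ ¬Q x} = #{x ∈ s | P x} - #{x ∈ s | Q x} := by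
  classical
  rw [filter_and_not, card_sdiff_of_subset fun x hx => ?_]
  rw [mem_filter] at hx ⊢
  exact ⟨hx.1, h x hx.1 hx.2⟩

theorem pow_dvd_sq_iff {p k x : ℕ} (hp : p.Prime) : p ^ k ∣ x ^ 2 ↔ p ^ ((k + 1) / 2) ∣ x := by
  rcases eq_or_ne x 0 with rfl | hx
  · simp
  rw [hp.pow_dvd_iff_le_factorization (pow_ne_zero 2 hx), hp.pow_dvd_iff_le_factorization hx,
    Nat.factorization_pow, Finsupp.smul_apply, smul_eq_mul]
  omega

theorem exists_pow_dvd_sq_add_one {p : ℕ} (hp : p.Prime) (h4 : p % 4 = 1) (k : ℕ) :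
    ∃ i : ℤ, (p : ℤ) ^ k ∣ i ^ 2 + 1 := by
  have := Fact.mk hp
  obtain ⟨j, hj⟩ := ZMod.exists_sq_eq_neg_one_iff.mpr (by omega : p % 4 ≠ 3)
  have hj' : (p : ℤ) ∣ (j.val : ℤ) ^ 2 - (-1) := by
    rw [← ZMod.intCast_zmod_eq_zero_iff_dvd]
    push_cast
    rw [ZMod.natCast_zmod_val, hj]
    ring
  have hodd : Odd (p ^ k) := (Nat.odd_iff.mpr (by omega)).pow
  -- `j² ≡ -1 (mod p)` lifts to `(j ^ p ^ k)² ≡ (-1) ^ p ^ k = -1 (mod p ^ (k + 1))`.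
  refine ⟨(j.val : ℤ) ^ p ^ k, (pow_dvd_pow _ k.le_succ).trans ?_⟩
  convert dvd_sub_pow_of_dvd_sub hj' k using 1
  rw [hodd.neg_one_pow]
  ring

theorem not_dvd_two_mul_mul {p : ℕ} (hp : p.Prime) (hodd : Odd p) {i m : ℤ}
    (hi : (p : ℤ) ∣ i ^ 2 + 1) (hm : ¬(p : ℤ) ∣ m) : ¬(p : ℤ) ∣ 2 * (i * m) := by
  have hpZ : Prime (p : ℤ) := Nat.prime_iff_prime_int.mp hp
  have h2 : ¬(p : ℤ) ∣ 2 := fun h => hodd.ne_two_of_dvd_nat dvd_rfl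
    ((Nat.prime_dvd_prime_iff_eq hp Nat.prime_two).mp (by exact_mod_cast h))
  have hi' : ¬(p : ℤ) ∣ i := fun h =>
    hpZ.not_dvd_one ((dvd_add_right (dvd_pow h two_ne_zero)).mp hi)
  intro h
  rcases hpZ.dvd_or_dvd h with h | h
  · exact h2 h
  rcases hpZ.dvd_or_dvd h with h | h
  · exact hi' h
  · exact hm h

theorem pow_dvd_sq_add_sq_iff {p k : ℕ} (hp : p.Prime) (hodd : Odd p) (hk : k ≠ 0) {i m : ℤ}
    (hi : (p : ℤ) ^ k ∣ i ^ 2 + 1) (hm : ¬(p : ℤ) ∣ m) (x : ℤ) :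
    (p : ℤ) ^ k ∣ x ^ 2 + m ^ 2 ↔ (p : ℤ) ^ k ∣ x - i * m ∨ (p : ℤ) ^ k ∣ x - -(i * m) := by
  have hpZ : Prime (p : ℤ) := Nat.prime_iff_prime_int.mp hp
  rw [show x ^ 2 + m ^ 2 = (x - i * m) * (x - -(i * m)) + m ^ 2 * (i ^ 2 + 1) by ring,
    dvd_add_left (dvd_mul_of_dvd_right hi _)]
  refine ⟨fun h => ?_, fun h => h.elim (dvd_mul_of_dvd_left · _) (dvd_mul_of_dvd_right · _)⟩
  by_cases hminus : (p : ℤ) ∣ x - i * m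
  · refine .inl (hpZ.pow_dvd_of_dvd_mul_right k (fun hplus => ?_) h)
    have h2im := dvd_sub hplus hminus
    rw [show x - -(i * m) - (x - i * m) = 2 * (i * m) by ring] at h2im
    exact not_dvd_two_mul_mul hp hodd ((dvd_pow_self _ hk).trans hi) hm h2im
  · exact .inr (hpZ.pow_dvd_of_dvd_mul_left k hminus h)

theorem card_filter_range_pow_dvd_sq_add_sq {p k K m : ℕ} (hp : p.Prime) (h4 : p % 4 = 1)
    (hm : ¬p ∣ m) (hk : k ≠ 0) (hkK : k ≤ K) :
    #{y ∈ range (p ^ K) | p ^ k ∣ y ^ 2 + m ^ 2} = 2 * p ^ (K - k) := by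
  have hodd : Odd p := Nat.odd_iff.mpr (by omega)
  have hmZ : ¬(p : ℤ) ∣ m := by exact_mod_cast hm
  obtain ⟨i, hi⟩ := exists_pow_dvd_sq_add_one hp h4 k
  have hroots (y : ℕ) : p ^ k ∣ y ^ 2 + m ^ 2 ↔
      ((p ^ k : ℕ) : ℤ) ∣ ↑y - i * m ∨ ((p ^ k : ℕ) : ℤ) ∣ ↑y - -(i * m) := by
    rw [← Int.natCast_dvd_natCast]
    push_cast
    exact pow_dvd_sq_add_sq_iff hp hodd hk hi hmZ y
  have hdisj : Disjoint {y ∈ range (p ^ K) | ((p ^ k : ℕ) : ℤ) ∣ ↑y - i * m}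
      {y ∈ range (p ^ K) | ((p ^ k : ℕ) : ℤ) ∣ ↑y - -(i * m)} := by
    refine disjoint_filter.mpr fun y _ hminus hplus => ?_
    have h2im := dvd_sub hplus hminus
    rw [show (y : ℤ) - -(i * m) - (y - i * m) = 2 * (i * m) by ring] at h2im
    push_cast at h2im
    exact not_dvd_two_mul_mul hp hodd ((dvd_pow_self _ hk).trans hi) hmZ
      ((dvd_pow_self _ hk).trans h2im)
  have hK : p ^ K = p ^ (K - k) * p ^ k := by rw [← pow_add, Nat.sub_add_cancel hkK]
  rw [filter_congr fun y _ => hroots y, filter_or, card_union_of_disjoint hdisj, hK,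
    card_filter_range_mul_dvd_sub (pow_pos hp.pos k),
    card_filter_range_mul_dvd_sub (pow_pos hp.pos k)]
  ring

theorem not_dvd_sq_add_sq_of_mod_four_eq_three {p m : ℕ} (hp : p.Prime) (h4 : p % 4 = 3)
    (hm : ¬p ∣ m) (y : ℕ) : ¬p ∣ y ^ 2 + m ^ 2 := by
  have := Fact.mk hp
  intro h
  refine ZMod.mod_four_ne_three_of_sq_eq_neg_sq' (x := (y : ZMod p)) (y := m) ?_ ?_ h4
  · rwa [Ne, ZMod.natCast_eq_zero_iff]
  · rw [eq_neg_iff_add_eq_zero]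
    exact_mod_cast (ZMod.natCast_eq_zero_iff _ _).mpr h

theorem pow_dvd_of_pow_two_mul_dvd_sq_add_sq {p f c x : ℕ} (hp : p.Prime) (hc : p ^ f ∣ c)
    (h : p ^ (2 * f) ∣ x ^ 2 + c ^ 2) : p ^ f ∣ x := by
  have hc2 : p ^ (2 * f) ∣ c ^ 2 := by rw [mul_comm, pow_mul]; exact pow_dvd_pow_of_dvd hc 2
  have := (pow_dvd_sq_iff hp).mp ((Nat.dvd_add_left hc2).mp h)
  rwa [show (2 * f + 1) / 2 = f by omega] at this

theorem pow_two_mul_add_dvd_iff {p : ℕ} (hp : 0 < p) (f j y m : ℕ) :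
    p ^ (2 * f + j) ∣ (p ^ f * y) ^ 2 + (p ^ f * m) ^ 2 ↔ p ^ j ∣ y ^ 2 + m ^ 2 := by
  rw [show (p ^ f * y) ^ 2 + (p ^ f * m) ^ 2 = p ^ (2 * f) * (y ^ 2 + m ^ 2) by ring, pow_add]
  exact Nat.mul_dvd_mul_iff_left (pow_pos hp _)

def IsLocalSolution (p e c x : ℕ) : Prop :=
  p ^ e ∣ x ^ 2 + c ^ 2 ∧ ¬(p ∣ x ∧ p ^ (e + 1) ∣ x ^ 2 + c ^ 2)

instance (p e c : ℕ) : DecidablePred (IsLocalSolution p e c) :=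
  fun _ => inferInstanceAs (Decidable (_ ∧ _))

theorem s_eq_card_filter_isLocalSolution (c p e : ℕ) :
    s c p e = #{x ∈ range (p ^ e) | IsLocalSolution p e c x} := by
  rw [s, ← Set.ncard_coe_finset]
  congr 1
  ext x
  simp only [mem_coe, mem_filter, mem_range, Set.mem_ofPred_eq]
  unfold IsLocalSolution
  refine and_congr_right fun _ => ?_
  norm_cast
  refine and_congr_right fun h => ?_
  rw [Nat.dvd_div_iff_mul_dvd h, ← pow_succ]

theorem s_of_not_dvd_of_mod_four_eq_one {p c e : ℕ} (hp : p.Prime) (h4 : p % 4 = 1)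
    (hc : ¬p ∣ c) (he : e ≠ 0) : s c p e = 2 := by
  have hprim (x : ℕ) : IsLocalSolution p e c x ↔ p ^ e ∣ x ^ 2 + c ^ 2 := by
    refine and_iff_left_of_imp fun h hx => hc (hp.dvd_of_dvd_pow (n := 2) ?_)
    exact (Nat.dvd_add_right (dvd_pow hx.1 two_ne_zero)).mp ((dvd_pow_self p he).trans h)
  rw [s_eq_card_filter_isLocalSolution, filter_congr fun x _ => hprim x,
    card_filter_range_pow_dvd_sq_add_sq hp h4 hc he le_rfl, Nat.sub_self, pow_zero, mul_one]

theorem s_pow_mul_eq_sub {p f m : ℕ} (hp : p.Prime) (hf : f ≠ 0) (d : ℕ) :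
    s (p ^ f * m) p (2 * f + d) =
      #{y ∈ range (p ^ (f + d)) | p ^ d ∣ y ^ 2 + m ^ 2} -
        #{y ∈ range (p ^ (f + d)) | p ^ (d + 1) ∣ y ^ 2 + m ^ 2} := by
  have hsplit : p ^ (2 * f + d) = p ^ (f + d) * p ^ f := by rw [← pow_add]; ring_nf
  rw [s_eq_card_filter_isLocalSolution, hsplit, card_filter_range_mul_of_dvd (pow_pos hp.pos f) _
      (P := IsLocalSolution p (2 * f + d) (p ^ f * m))
      (Q := fun y => p ^ d ∣ y ^ 2 + m ^ 2 ∧ ¬p ^ (d + 1) ∣ y ^ 2 + m ^ 2)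
      (fun x hx => pow_dvd_of_pow_two_mul_dvd_sq_add_sq hp (dvd_mul_right _ _)
        ((pow_dvd_pow p (Nat.le_add_right _ _)).trans hx.1))
      (fun y => ?_)]
  · exact card_filter_and_not_of_imp _ fun y _ => (pow_dvd_pow p d.le_succ).trans
  · rw [IsLocalSolution, pow_two_mul_add_dvd_iff hp.pos, add_assoc, pow_two_mul_add_dvd_iff hp.pos]
    simp [dvd_mul_of_dvd_left (dvd_pow_self p hf)]

theorem s_pow_mul_of_mod_four_eq_one {p f m d : ℕ} (hp : p.Prime) (h4 : p % 4 = 1)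
    (hm : ¬p ∣ m) (hf : f ≠ 0) (hd : d ≠ 0) :
    s (p ^ f * m) p (2 * f + d) = 2 * (p - 1) * p ^ (f - 1) := by
  rw [s_pow_mul_eq_sub hp hf, card_filter_range_pow_dvd_sq_add_sq hp h4 hm hd (by omega),
    card_filter_range_pow_dvd_sq_add_sq hp h4 hm d.succ_ne_zero (by omega)]
  obtain ⟨g, rfl⟩ := Nat.exists_eq_add_one_of_ne_zero hf
  rw [show g + 1 + d - d = g + 1 by omega, show g + 1 + d - (d + 1) = g by omega,
    Nat.add_sub_cancel, mul_assoc, Nat.sub_one_mul, ← pow_succ', Nat.mul_sub]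

theorem s_pow_mul_two_mul {p f m : ℕ} (hp : p.Prime) (hf : f ≠ 0) :
    s (p ^ f * m) p (2 * f) = p ^ f - #{y ∈ range (p ^ f) | p ∣ y ^ 2 + m ^ 2} := by
  simpa only [add_zero, zero_add, pow_zero, pow_one, one_dvd, filter_true, card_range]
    using s_pow_mul_eq_sub (m := m) hp hf 0

theorem s_pow_mul_two_mul_of_mod_four_eq_one {p f m : ℕ} (hp : p.Prime) (h4 : p % 4 = 1)
    (hm : ¬p ∣ m) (hf : f ≠ 0) : s (p ^ f * m) p (2 * f) = (p - 2) * p ^ (f - 1) := by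
  have := card_filter_range_pow_dvd_sq_add_sq hp h4 hm one_ne_zero (Nat.one_le_iff_ne_zero.mpr hf)
  rw [pow_one] at this
  rw [s_pow_mul_two_mul hp hf, this]
  obtain ⟨g, rfl⟩ := Nat.exists_eq_add_one_of_ne_zero hf
  rw [Nat.add_sub_cancel, Nat.sub_mul, pow_succ']

theorem s_pow_mul_two_mul_of_mod_four_eq_three {p f m : ℕ} (hp : p.Prime) (h4 : p % 4 = 3)
    (hm : ¬p ∣ m) (hf : f ≠ 0) : s (p ^ f * m) p (2 * f) = p ^ f := by
  rw [s_pow_mul_two_mul hp hf, card_eq_zero.mpr (filter_eq_empty_iff.mpr fun y _ =>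
    not_dvd_sq_add_sq_of_mod_four_eq_three hp h4 hm y), Nat.sub_zero]

theorem s_pow_mul_eq_zero_of_mod_four_eq_three {p f m d : ℕ} (hp : p.Prime) (h4 : p % 4 = 3)
    (hm : ¬p ∣ m) (hd : d ≠ 0) : s (p ^ f * m) p (2 * f + d) = 0 := by
  rw [s_eq_card_filter_isLocalSolution, card_eq_zero, filter_eq_empty_iff]
  intro x _ hx
  have hx1 := (pow_dvd_pow p (by omega : 2 * f + 1 ≤ 2 * f + d)).trans hx.1
  obtain ⟨y, rfl⟩ := pow_dvd_of_pow_two_mul_dvd_sq_add_sq hp (dvd_mul_right _ _)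
    ((pow_dvd_pow p (Nat.le_succ _)).trans hx1)
  rw [pow_two_mul_add_dvd_iff hp.pos, pow_one] at hx1
  exact not_dvd_sq_add_sq_of_mod_four_eq_three hp h4 hm y hx1

theorem s_eq_card_of_pow_succ_dvd_sq {p c e : ℕ} (hc : p ^ (e + 1) ∣ c ^ 2) :
    s c p e = #{x ∈ range (p ^ e) | p ^ e ∣ x ^ 2 ∧ ¬(p ∣ x ∧ p ^ (e + 1) ∣ x ^ 2)} := by
  rw [s_eq_card_filter_isLocalSolution]
  congr 1
  refine filter_congr fun x _ => ?_
  rw [IsLocalSolution, Nat.dvd_add_left hc, Nat.dvd_add_left ((pow_dvd_pow p e.le_succ).trans hc)]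

theorem s_two_mul_of_pow_dvd_sq {p c g : ℕ} (hp : p.Prime) (hg : g ≠ 0)
    (hc : p ^ (2 * g + 1) ∣ c ^ 2) : s c p (2 * g) = (p - 1) * p ^ (g - 1) := by
  rw [s_eq_card_of_pow_succ_dvd_sq hc]
  have hval (x : ℕ) : p ^ (2 * g) ∣ x ^ 2 ∧ ¬(p ∣ x ∧ p ^ (2 * g + 1) ∣ x ^ 2) ↔
      p ^ g ∣ x ∧ ¬p ^ (g + 1) ∣ x := by
    rw [pow_dvd_sq_iff hp, pow_dvd_sq_iff hp, show (2 * g + 1) / 2 = g by omega,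
      show (2 * g + 1 + 1) / 2 = g + 1 by omega]
    exact and_congr_right fun _ => not_congr
      (and_iff_right_of_imp fun h => (dvd_pow_self p g.succ_ne_zero).trans h)
  rw [filter_congr fun x _ => hval x, card_filter_and_not_of_imp _
      fun x _ => (pow_dvd_pow p g.le_succ).trans,
    card_filter_range_pow_dvd hp.pos (by omega), card_filter_range_pow_dvd hp.pos (by omega)]
  obtain ⟨g, rfl⟩ := Nat.exists_eq_add_one_of_ne_zero hg
  rw [show 2 * (g + 1) - (g + 1) = g + 1 by omega, show 2 * (g + 1) - (g + 1).succ = g by omega,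
    Nat.add_sub_cancel, Nat.sub_one_mul, pow_succ']

theorem s_two_mul_add_one_of_pow_dvd_sq {p c g : ℕ} (hp : p.Prime)
    (hc : p ^ (2 * g + 2) ∣ c ^ 2) : s c p (2 * g + 1) = 0 := by
  rw [s_eq_card_of_pow_succ_dvd_sq hc, card_eq_zero, filter_eq_empty_iff]
  intro x _ ⟨hx, hnot⟩
  rw [pow_dvd_sq_iff hp] at hx
  refine hnot ⟨(dvd_pow_self p (by omega)).trans hx, ?_⟩
  rwa [pow_dvd_sq_iff hp, show (2 * g + 1 + 1 + 1) / 2 = (2 * g + 1 + 1) / 2 by omega]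

theorem local_count_values_general (p : ℕ) (hp : p.Prime)
    (e : ℕ) (he : 1 ≤ e) (c₁ : ℕ) (hc : 0 < c₁)
    (f : ℕ) (hf : c₁.factorization p = f) :
    ((2 * f + 1 ≤ e ∧ p % 4 = 1) →
      s c₁ p e = if f = 0 then 2 else 2 * (p - 1) * p ^ (f - 1)) ∧
    ((2 * f + 1 ≤ e ∧ p % 4 = 3) → s c₁ p e = 0) ∧
    ((e = 2 * f ∧ 1 ≤ f ∧ p % 4 = 1) → s c₁ p e = (p - 2) * p ^ (f - 1)) ∧
    ((e = 2 * f ∧ p % 4 = 3) → s c₁ p e = p ^ f) ∧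
    ((e < 2 * f ∧ Even e) → s c₁ p e = (p - 1) * p ^ (e / 2 - 1)) ∧
    ((e < 2 * f ∧ Odd e) → s c₁ p e = 0) := by
  obtain ⟨m, rfl, hm⟩ : ∃ m, c₁ = p ^ f * m ∧ ¬p ∣ m :=
    ⟨c₁ / p ^ f, by rw [← hf, Nat.ordProj_mul_ordCompl_eq_self],
      hf ▸ Nat.not_dvd_ordCompl hp hc.ne'⟩
  have hc₁ (k : ℕ) (hk : k ≤ 2 * f) : p ^ k ∣ (p ^ f * m) ^ 2 := by
    rw [mul_pow, ← pow_mul]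
    exact dvd_mul_of_dvd_left (pow_dvd_pow p (by omega)) _
  refine ⟨?_, ?_, ?_, ?_, ?_, ?_⟩
  · rintro ⟨hfe, h4⟩
    obtain ⟨d, rfl⟩ := Nat.exists_eq_add_of_le (by omega : 2 * f ≤ e)
    split_ifs with hf0
    · subst hf0
      simpa using s_of_not_dvd_of_mod_four_eq_one hp h4 hm (by omega : d ≠ 0)
    · exact s_pow_mul_of_mod_four_eq_one hp h4 hm hf0 (by omega)
  · rintro ⟨hfe, h4⟩
    obtain ⟨d, rfl⟩ := Nat.exists_eq_add_of_le (by omega : 2 * f ≤ e)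
    exact s_pow_mul_eq_zero_of_mod_four_eq_three hp h4 hm (by omega)
  · rintro ⟨rfl, hf0, h4⟩
    exact s_pow_mul_two_mul_of_mod_four_eq_one hp h4 hm (by omega)
  · rintro ⟨rfl, h4⟩
    exact s_pow_mul_two_mul_of_mod_four_eq_three hp h4 hm (by omega)
  · rintro ⟨hfe, g, rfl⟩
    rw [← two_mul, s_two_mul_of_pow_dvd_sq hp (by omega) (hc₁ _ (by omega)),
      Nat.mul_div_cancel_left g two_pos]
  · rintro ⟨hfe, g, rfl⟩
    exact s_two_mul_add_one_of_pow_dvd_sq hp (hc₁ _ (by omega))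

/-- The values of `s_p(e,c₁)` for an odd prime `p`, where `f = v_p(c₁)`. -/
theorem local_count_values (p : ℕ) (hp : p.Prime) (hodd : Odd p)
    (e : ℕ) (he : 1 ≤ e) (c₁ : ℕ) (hc : 0 < c₁)
    (f : ℕ) (hf : c₁.factorization p = f) :
    ((2 * f + 1 ≤ e ∧ p % 4 = 1) →
      s c₁ p e = if f = 0 then 2 else 2 * (p - 1) * p ^ (f - 1)) ∧
    ((2 * f + 1 ≤ e ∧ p % 4 = 3) → s c₁ p e = 0) ∧
    ((e = 2 * f ∧ 1 ≤ f ∧ p % 4 = 1) → s c₁ p e = (p - 2) * p ^ (f - 1)) ∧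
    ((e = 2 * f ∧ p % 4 = 3) → s c₁ p e = p ^ f) ∧
    ((e < 2 * f ∧ Even e) → s c₁ p e = (p - 1) * p ^ (e / 2 - 1)) ∧
    ((e < 2 * f ∧ Odd e) → s c₁ p e = 0) :=
  local_count_values_general p hp e he c₁ hc f hf
end
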